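/- Assume the bound |ψ(x) − x| < (1/(8π)) x^{1/2} (log x)² holds for all x ≥ x₀. Then for every β > 1/2 there exists x₁ ≥ x₀ such that for all x ≥ x₁ the interval (x, x + x^β] contains a prime power p^n with n ≥ 1, i.e., ψ(x + x^β) − ψ(x) > 0. -/

import Mathlib

open Finset Real

noncomputable def psi (x : ℝ) : ℝ :=
  ∑ n ∈ Finset.Icc 1 ⌊x⌋₊, ArithmeticFunction.vonMangoldt n

/-!
For `1/2 < γ ≤ 1` and `y = x + x ^ γ ≤ 2x`, the error bound at `x` and at `y` gives
`ψ y - ψ x > x ^ γ - E x - E (2x)` as soon as the error term `E` is monotone, and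
`E x = O(x ^ (1/2) (log x)²) = o(x ^ γ)`. For larger `β`, monotonicity of `ψ` does the rest.
-/
open Filter Asymptotics

lemma psi_mono : Monotone psi := fun _ _ hab =>
  Finset.sum_le_sum_of_subset_of_nonneg
    (Finset.Icc_subset_Icc_right (Nat.floor_mono hab))
    (fun _ _ _ => ArithmeticFunction.vonMangoldt_nonneg)

lemma isLittleO_const_mul_rpow_mul_log_pow_rpow (c : ℝ) {a b : ℝ} (hab : a < b) (n : ℕ) :
    (fun x => c * x ^ a * log x ^ n) =o[atTop] fun x => x ^ b := by
  have hlog : (fun x => log x ^ n) =o[atTop] fun x => x ^ (b - a) := by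
    simpa only [rpow_natCast] using isLittleO_log_rpow_rpow_atTop n (sub_pos.mpr hab)
  refine ((isBigO_const_mul_self c (fun x : ℝ => x ^ a) atTop).mul_isLittleO hlog).congr' .rfl ?_
  filter_upwards [eventually_gt_atTop 0] with x hx
  rw [← rpow_add hx, add_sub_cancel]

lemma monotoneOn_const_mul_rpow_mul_log_pow {c a : ℝ} (hc : 0 ≤ c) (ha : 0 ≤ a) (n : ℕ) :
    MonotoneOn (fun x => c * x ^ a * log x ^ n) (Set.Ici 1) := by
  intro x (hx : 1 ≤ x) y _ hxy
  have := log_nonneg hx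
  have : 0 ≤ y := by linarith
  dsimp only
  gcongr

lemma eventually_psi_add_rpow_sub_psi_pos {E : ℝ → ℝ} {γ : ℝ} (hγ : γ ≤ 1)
    (hψ : ∀ᶠ x in atTop, |psi x - x| < E x) (hE_mono : MonotoneOn E (Set.Ici 1))
    (hE : E =o[atTop] fun x => x ^ γ) :
    ∀ᶠ x in atTop, 0 < psi (x + x ^ γ) - psi x := by
  have hE_two : (fun x => E (2 * x)) =o[atTop] fun x => x ^ γ := by
    refine (hE.comp_tendsto (tendsto_id.const_mul_atTop two_pos)).trans_isBigO ?_
    refine (isBigO_const_mul_self ((2 : ℝ) ^ γ) _ atTop).congr' ?_ .rfl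
    filter_upwards [eventually_ge_atTop 0] with x hx
    exact (mul_rpow zero_le_two hx).symm
  have hshift : Tendsto (fun x => x + x ^ γ) atTop atTop :=
    tendsto_atTop_mono' _ ((eventually_ge_atTop 0).mono fun x hx =>
      le_add_of_nonneg_right (rpow_nonneg hx γ)) tendsto_id
  filter_upwards [hψ, hshift.eventually hψ, (hE_two.add hE).bound (by norm_num : (0 : ℝ) < 1 / 2),
    eventually_ge_atTop 1] with x hψx hψy hsmall hx
  have hpos : 0 < x ^ γ := rpow_pos_of_pos (by linarith) γ
  have hle : x ^ γ ≤ x := by simpa using rpow_le_rpow_of_exponent_le hx hγ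
  have hEy : E (x + x ^ γ) ≤ E (2 * x) :=
    hE_mono (show (1 : ℝ) ≤ _ by linarith) (show (1 : ℝ) ≤ _ by linarith) (by linarith)
  rw [Real.norm_eq_abs, Real.norm_of_nonneg hpos.le] at hsmall
  linarith [abs_lt.mp hψx, abs_lt.mp hψy, le_abs_self (E (2 * x) + E x)]

theorem stmt_9_general (x₀ : ℝ)
    (h : ∀ x : ℝ, x₀ ≤ x → |psi x - x| < (1/(8*Real.pi)) * x ^ ((1:ℝ)/2) * (Real.log x) ^ 2) :
    ∀ β : ℝ, 1/2 < β →
      ∃ x₁ : ℝ, x₀ ≤ x₁ ∧ ∀ x : ℝ, x₁ ≤ x → 0 < psi (x + x ^ β) - psi x := by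
  intro β hβ
  set γ := min β 1
  have hgap := eventually_psi_add_rpow_sub_psi_pos (min_le_right β 1)
    (eventually_atTop.mpr ⟨x₀, h⟩)
    (monotoneOn_const_mul_rpow_mul_log_pow (by positivity) (by norm_num) 2)
    (isLittleO_const_mul_rpow_mul_log_pow_rpow _ (lt_min hβ (by norm_num)) 2)
  obtain ⟨a, ha⟩ := eventually_atTop.mp (hgap.and (eventually_ge_atTop 1))
  refine ⟨max a x₀, le_max_right _ _, fun x hx => ?_⟩
  obtain ⟨hgap_x, hx1⟩ := ha x (le_of_max_le_left hx)
  have : x ^ γ ≤ x ^ β := rpow_le_rpow_of_exponent_le hx1 (min_le_left β 1)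
  linarith [psi_mono (show x + x ^ γ ≤ x + x ^ β by linarith)]

theorem stmt_9 (x₀ : ℝ) (hx₀ : 2 ≤ x₀)
    (h : ∀ x : ℝ, x₀ ≤ x → |psi x - x| < (1/(8*Real.pi)) * x ^ ((1:ℝ)/2) * (Real.log x) ^ 2) :
    ∀ β : ℝ, 1/2 < β →
      ∃ x₁ : ℝ, x₀ ≤ x₁ ∧ ∀ x : ℝ, x₁ ≤ x → 0 < psi (x + x ^ β) - psi x :=
  stmt_9_general x₀ h
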